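/- arXiv:2005.07357 — 2 statements merged into one kernel-verified Lean document; each statement's English description precedes it below -/
import Mathlib

section
/- Let C and C' be a pair of anti-caterpillars on the same leaf set of size at least three, and let a, b, c be three distinct leaves. If the restriction of C to {a, b, c} is the triple ab|c, then the restriction of C' to {a, b, c} is not the triple ab|c (it is either ac|b or bc|a). Consequently no triple is embedded in both C and C'. -/
/-!
Rooted binary phylogenetic trees, restrictions, agreement subtrees, and
maximum agreement subtrees (MASTs), following Martin–Thatte style definitions.
-/

namespace PhyloMAST

/-- A rooted binary tree with leaves labelled by `α`. -/
inductive PTree (α : Type) : Type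
  | leaf : α → PTree α
  | node : PTree α → PTree α → PTree α

namespace PTree

variable {α β : Type}

/-- The list of leaf labels, read left to right. -/
def leafList : PTree α → List α
  | leaf x => [x]
  | node l r => leafList l ++ leafList r

/-- The set of leaf labels. -/
def leaves [DecidableEq α] (t : PTree α) : Finset α := t.leafList.toFinset

/-- The height: number of edges on a longest root-to-leaf path. -/
def height : PTree α → ℕ
  | leaf _ => 0
  | node l r => max (height l) (height r) + 1

/-- `t` is a genuine phylogenetic tree: its leaf labels are pairwise distinct. -/
def Phylo (t : PTree α) : Prop := t.leafList.Nodup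

/-- `t` is balanced: its number of leaves is `2 ^ height`. -/
def Balanced (t : PTree α) : Prop := t.leafList.length = 2 ^ t.height

/-- The restriction `t|Y`: the minimal subtree connecting the leaves in `Y`
with all non-root degree-two vertices suppressed; `none` if no leaf of `t`
lies in `Y`. -/
def restrict [DecidableEq α] : PTree α → Finset α → Option (PTree α)
  | leaf x, Y => if x ∈ Y then some (leaf x) else none
  | node l r, Y =>
    match restrict l Y, restrict r Y with
    | some l', some r' => some (node l' r')
    | some l', none => some l'
    | none, some r' => some r'
    | none, none => none

/-- Isomorphism of leaf-labelled rooted binary trees (children are unordered). -/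
inductive Iso : PTree α → PTree α → Prop
  | leaf (x : α) : Iso (leaf x) (leaf x)
  | node {a b c d : PTree α} : Iso a c → Iso b d → Iso (node a b) (node c d)
  | swap {a b c d : PTree α} : Iso a d → Iso b c → Iso (node a b) (node c d)

/-- `Agree S T Y`: the set `Y` induces an agreement subtree of `S` and `T`. -/
def Agree [DecidableEq α] (S T : PTree α) (Y : Finset α) : Prop :=
  Y ⊆ S.leaves ∩ T.leaves ∧
    ∃ S' T', S.restrict Y = some S' ∧ T.restrict Y = some T' ∧ Iso S' T'

/-- `mast S T`: the maximum size of an agreement subtree of `S` and `T`. -/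
noncomputable def mast [DecidableEq α] (S T : PTree α) : ℕ :=
  sSup {k | ∃ Y : Finset α, Agree S T Y ∧ Y.card = k}

/-- The caterpillar tree `(l₁, l₂, …, lₙ)` built from a (nonempty) list:
`l₁` and `l₂` share a parent, and each later leaf hangs off the path to the
root, which is adjacent to the last leaf. -/
def catList [Inhabited α] : List α → PTree α
  | [] => leaf default
  | x :: xs => xs.foldl (fun t y => node t (leaf y)) (leaf x)

/-- `T` embeds the phylogenetic tree `T'`: the label set of `T'` is contained
in that of `T`, and the restriction of `T` to it is isomorphic to `T'`. -/
def Embeds [DecidableEq α] (T T' : PTree α) : Prop :=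
  T'.leaves ⊆ T.leaves ∧ ∃ R, T.restrict T'.leaves = some R ∧ Iso R T'

/-- `Subtree s t`: `s` is a (pendant) subtree of `t` (possibly `t` itself). -/
inductive Subtree : PTree α → PTree α → Prop
  | refl (t : PTree α) : Subtree t t
  | left {s l r : PTree α} : Subtree s l → Subtree s (node l r)
  | right {s l r : PTree α} : Subtree s r → Subtree s (node l r)

/-- The pendant subtrees rooted at depth `k`, read left to right. -/
def subtreesAt : ℕ → PTree α → List (PTree α)
  | 0, t => [t]
  | _ + 1, leaf x => [leaf x]
  | k + 1, node l r => subtreesAt k l ++ subtreesAt k r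

/-- Two trees have the same unlabelled shape (a labelling of the second
yields the first). -/
inductive SameShape : PTree α → PTree β → Prop
  | leaf (x : α) (y : β) : SameShape (leaf x) (leaf y)
  | node {a b : PTree α} {c d : PTree β} :
      SameShape a c → SameShape b d → SameShape (node a b) (node c d)

end PTree

end PhyloMAST

open PhyloMAST PTree
namespace PhyloMAST
namespace PTree
variable {α : Type} [DecidableEq α] [Inhabited α]

set_option linter.unusedSectionVars false

lemma catList_append_singleton (l : List α) (hl : l ≠ []) (y : α) :
    catList (l ++ [y]) = node (catList l) (leaf y) := by
  match l with
  | x :: xs => simp [catList, List.foldl_append]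

lemma leafList_catList : ∀ l : List α, l ≠ [] → (catList l).leafList = l := by
  intro l
  induction l using List.reverseRecOn with
  | nil => intro h; exact absurd rfl h
  | append_singleton l y ih =>
    intro _
    rcases eq_or_ne l [] with rfl | hl
    · simp [catList, leafList]
    · rw [catList_append_singleton l hl, leafList, ih hl]; simp [leafList]

lemma restrict_catList (Y : Finset α) : ∀ l : List α, l ≠ [] →
    restrict (catList l) Y =
      if (l.filter (· ∈ Y)) = [] then none
      else some (catList (l.filter (· ∈ Y))) := by
  intro l
  induction l using List.reverseRecOn with
  | nil => intro h; exact absurd rfl h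
  | append_singleton l y ih =>
    intro _
    rcases eq_or_ne l [] with rfl | hl
    · by_cases hy : y ∈ Y <;> simp [catList, restrict, hy]
    · rw [catList_append_singleton l hl]
      simp only [restrict]
      rw [ih hl]
      by_cases hy : y ∈ Y
      · by_cases hf : l.filter (· ∈ Y) = []
        · simp [hy, hf, List.filter_append, restrict, catList]
        · simp [hy, hf, List.filter_append, restrict,
            catList_append_singleton _ hf]
      · by_cases hf : l.filter (· ∈ Y) = [] <;>
          simp [hy, hf, List.filter_append, restrict]
lemma catList_triple (x y z : α) :
    catList [x, y, z] = node (node (leaf x) (leaf y)) (leaf z) := rfl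

lemma iso_triple_iff {p q r x y z : α} :
    Iso (node (node (leaf p) (leaf q)) (leaf r)) (node (node (leaf x) (leaf y)) (leaf z)) ↔
      ((p = x ∧ q = y) ∨ (p = y ∧ q = x)) ∧ r = z := by
  constructor
  · intro h
    cases h with
    | node h1 h2 =>
      cases h2
      cases h1 with
      | node ha hb => cases ha; cases hb; exact ⟨Or.inl ⟨rfl, rfl⟩, rfl⟩
      | swap ha hb => cases ha; cases hb; exact ⟨Or.inr ⟨rfl, rfl⟩, rfl⟩
    | swap h1 h2 => cases h1
  · rintro ⟨⟨rfl, rfl⟩ | ⟨rfl, rfl⟩, rfl⟩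
    · exact Iso.node (Iso.node (Iso.leaf _) (Iso.leaf _)) (Iso.leaf _)
    · exact Iso.node (Iso.swap (Iso.leaf _) (Iso.leaf _)) (Iso.leaf _)

lemma embeds_triple_iff (l : List α) (hnd : l.Nodup) (x y z : α)
    (hx : x ∈ l) (hy : y ∈ l) (hz : z ∈ l)
    (hxy : x ≠ y) (hxz : x ≠ z) (hyz : y ≠ z) :
    Embeds (catList l) (catList [x, y, z]) ↔
      (l.filter (· ∈ ([x, y, z] : List α).toFinset) = [x, y, z] ∨
        l.filter (· ∈ ([x, y, z] : List α).toFinset) = [y, x, z]) := by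
  have hl : l ≠ [] := by rintro rfl; simp at hx
  have hleaves : (catList [x, y, z]).leaves = ([x, y, z] : List α).toFinset := rfl
  have hll : (catList l).leaves = l.toFinset := by
    rw [leaves, leafList_catList l hl]
  have hxm : x ∈ l.filter (· ∈ ([x, y, z] : List α).toFinset) := by
    simp [List.mem_filter, hx]
  have hmne : l.filter (· ∈ ([x, y, z] : List α).toFinset) ≠ [] := by
    rintro h; rw [h] at hxm; simp at hxm
  have hres : restrict (catList l) ([x, y, z] : List α).toFinset =
      some (catList (l.filter (· ∈ ([x, y, z] : List α).toFinset))) := by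
    rw [restrict_catList _ l hl, if_neg hmne]
  constructor
  · rintro ⟨-, R, hR, hiso⟩
    rw [hleaves, hres] at hR
    have hRm : R = catList (l.filter (· ∈ ([x, y, z] : List α).toFinset)) := by
      injection hR.symm
    subst hRm
    have hym : y ∈ l.filter (· ∈ ([x, y, z] : List α).toFinset) := by
      simp [List.mem_filter, hy]
    have hzm : z ∈ l.filter (· ∈ ([x, y, z] : List α).toFinset) := by
      simp [List.mem_filter, hz]
    have hmnd : (l.filter (· ∈ ([x, y, z] : List α).toFinset)).Nodup := hnd.filter _
    have hsub : ∀ w ∈ l.filter (· ∈ ([x, y, z] : List α).toFinset),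
        w = x ∨ w = y ∨ w = z := by
      intro w hw
      have := (List.mem_filter.mp hw).2
      simpa using this
    have hfin : (l.filter (· ∈ ([x, y, z] : List α).toFinset)).toFinset
        = ({x, y, z} : Finset α) := by
      ext w
      rw [List.mem_toFinset]
      constructor
      · intro hw; rcases hsub w hw with rfl | rfl | rfl <;> simp
      · intro hw
        rw [Finset.mem_insert, Finset.mem_insert, Finset.mem_singleton] at hw
        rcases hw with rfl | rfl | rfl <;> assumption
    have hlen : (l.filter (· ∈ ([x, y, z] : List α).toFinset)).length = 3 := by
      rw [← List.toFinset_card_of_nodup hmnd, hfin]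
      rw [Finset.card_insert_of_notMem (by simp [hxy, hxz]),
        Finset.card_insert_of_notMem (by simp [hyz])]
      simp
    obtain ⟨p, q, r, hm3⟩ := List.length_eq_three.mp hlen
    rw [hm3] at hiso
    rw [catList_triple, catList_triple] at hiso
    obtain ⟨hpq, rfl⟩ := iso_triple_iff.mp hiso
    rcases hpq with ⟨rfl, rfl⟩ | ⟨rfl, rfl⟩
    · exact Or.inl hm3
    · exact Or.inr hm3
  · intro hcases
    refine ⟨?_, catList (l.filter (· ∈ ([x, y, z] : List α).toFinset)),
      by rw [hleaves]; exact hres, ?_⟩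
    · rw [hleaves, hll]
      intro w hw
      simp only [List.mem_toFinset, List.mem_cons, List.not_mem_nil, or_false] at hw
      simp only [List.mem_toFinset]
      rcases hw with rfl | rfl | rfl <;> assumption
    · rcases hcases with h | h
      · rw [h, catList_triple]
        exact Iso.node (Iso.node (Iso.leaf _) (Iso.leaf _)) (Iso.leaf _)
      · rw [h, catList_triple]
        exact Iso.node (Iso.swap (Iso.leaf _) (Iso.leaf _)) (Iso.leaf _)
lemma leaves_catList (l : List α) (hl : l ≠ []) : (catList l).leaves = l.toFinset := by
  rw [leaves, leafList_catList l hl]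

end PTree
end PhyloMAST

open PhyloMAST PTree
/-- If `C, C'` are anti-caterpillars on the same leaf set of
size at least three and `a, b, c` are distinct leaves with `C|{a,b,c} = ab|c`,
then `C'|{a,b,c}` is not `ab|c` (it is `ac|b` or `bc|a`); consequently no
triple is embedded in both `C` and `C'`. -/
theorem antiCaterpillars_no_common_triple {α : Type} [DecidableEq α] [Inhabited α]
    (l : List α) (hnd : l.Nodup) (hl : 3 ≤ l.length)
    (a b c : α) (ha : a ∈ l) (hb : b ∈ l) (hc : c ∈ l)
    (hab : a ≠ b) (hac : a ≠ c) (hbc : b ≠ c)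
    (h : Embeds (catList l) (catList [a, b, c])) :
    (¬ Embeds (catList l.reverse) (catList [a, b, c]) ∧
      (Embeds (catList l.reverse) (catList [a, c, b]) ∨
        Embeds (catList l.reverse) (catList [b, c, a]))) ∧
    (∀ x y z : α, x ≠ y → x ≠ z → y ≠ z →
      ¬ (Embeds (catList l) (catList [x, y, z]) ∧
          Embeds (catList l.reverse) (catList [x, y, z]))) := by
  have hnd' : l.reverse.Nodup := List.nodup_reverse.mpr hnd
  have ha' : a ∈ l.reverse := List.mem_reverse.mpr ha
  have hb' : b ∈ l.reverse := List.mem_reverse.mpr hb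
  have hc' : c ∈ l.reverse := List.mem_reverse.mpr hc
  have hr : ∀ (p : α → Bool), l.reverse.filter p = (l.filter p).reverse := by
    intro p; exact List.filter_reverse ..
  have hcong : ∀ (u v w u' v' w' : α), (∀ t : α, (t = u ∨ t = v ∨ t = w) ↔
      (t = u' ∨ t = v' ∨ t = w')) → ∀ L : List α,
      L.filter (· ∈ ([u, v, w] : List α).toFinset) =
        L.filter (· ∈ ([u', v', w'] : List α).toFinset) := by
    intro u v w u' v' w' hiff L
    apply List.filter_congr
    intro t _
    apply decide_eq_decide.mpr
    simpa using hiff t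
  have key := (embeds_triple_iff l hnd a b c ha hb hc hab hac hbc).mp h
  constructor
  · constructor
    · intro hK
      have hK' := (embeds_triple_iff l.reverse hnd' a b c ha' hb' hc' hab hac hbc).mp hK
      rw [hr] at hK'
      rcases key with h1 | h1 <;> rw [h1] at hK' <;>
        rcases hK' with hK' | hK' <;>
          simp [hab, hac, hbc, Ne.symm hab, Ne.symm hac, Ne.symm hbc] at hK'
    · rcases key with h1 | h1
      · right
        rw [embeds_triple_iff l.reverse hnd' b c a hb' hc' ha' hbc
          (Ne.symm hab) (Ne.symm hac)]
        rw [hcong b c a a b c (by tauto), hr, h1]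
        right; rfl
      · left
        rw [embeds_triple_iff l.reverse hnd' a c b ha' hc' hb' hac hab
          (Ne.symm hbc)]
        rw [hcong a c b a b c (by tauto), hr, h1]
        right; rfl
  · rintro x y z hxy hxz hyz ⟨h1, h2⟩
    have hlne : l ≠ [] := by rintro rfl; simp at ha
    have hlne' : l.reverse ≠ [] := by simp [hlne]
    have hx : x ∈ l := by
      have := h1.1 (show x ∈ (catList [x, y, z]).leaves by
        show x ∈ ([x, y, z] : List α).toFinset; simp)
      rwa [leaves_catList l hlne, List.mem_toFinset] at this
    have hy : y ∈ l := by
      have := h1.1 (show y ∈ (catList [x, y, z]).leaves by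
        show y ∈ ([x, y, z] : List α).toFinset; simp)
      rwa [leaves_catList l hlne, List.mem_toFinset] at this
    have hz : z ∈ l := by
      have := h1.1 (show z ∈ (catList [x, y, z]).leaves by
        show z ∈ ([x, y, z] : List α).toFinset; simp)
      rwa [leaves_catList l hlne, List.mem_toFinset] at this
    have hx' : x ∈ l.reverse := List.mem_reverse.mpr hx
    have hy' : y ∈ l.reverse := List.mem_reverse.mpr hy
    have hz' : z ∈ l.reverse := List.mem_reverse.mpr hz
    have A := (embeds_triple_iff l hnd x y z hx hy hz hxy hxz hyz).mp h1
    have B := (embeds_triple_iff l.reverse hnd' x y z hx' hy' hz' hxy hxz hyz).mp h2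
    rw [hr] at B
    rcases A with hA | hA <;> rw [hA] at B <;> rcases B with hB | hB <;>
      simp [hxy, hxz, hyz, Ne.symm hxy, Ne.symm hxz, Ne.symm hyz] at hB
end

section
/- Let S be a balanced rooted binary phylogenetic tree on 2^(h1) leaves and T a balanced rooted binary phylogenetic tree on 2^(h2) leaves (h1, h2 nonnegative integers), and suppose their label sets intersect in exactly t leaves with t > 0. Then mast(S, T) ≥ 2^(0.22·log₂ t − 0.025·(h1 + h2)). -/
/-!
Write `t` for the overlap of `S` and `T` and `h` for the sum of their heights (for balanced trees,
`h = h₁ + h₂`); the bound `mast S T ≥ 2 ^ (0.22 log₂ t - 0.025 h)` is proved by induction on the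
trees. Split both roots, `S = (S₁, S₂)` and `T = (T₁, T₂)`, so that `t = ∑ tᵢⱼ` with
`tᵢⱼ = |L(Sᵢ) ∩ L(Tⱼ)|`, and put `ρ = 2 ^ (-5/44)`, `δ = 2 ^ (-105/22)`: these are chosen so that
`0.22 log₂ ρ = -0.025` and `0.22 log₂ δ = -1 - 2 · 0.025`, and numerically `ρ + 2δ ≤ 1`.
If a row or column sum of `(tᵢⱼ)` is at least `ρ t`, pass to that child against the other whole
tree: `h` drops by one, which pays exactly for the factor `ρ`. Otherwise `ρ + 2δ ≤ 1` forces both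
entries of one diagonal to be at least `δ t`; agreement subtrees of the two diagonal pairs have
disjoint leaf sets and combine into one for `S, T`, and each of the two recursive bounds is
exactly half of the bound for `S, T`.
-/

namespace PhyloMAST.PTree

variable {α : Type}

lemma height_lt_node_left (l r : PTree α) : l.height < (node l r).height := by
  simp only [height]; omega

lemma height_lt_node_right (l r : PTree α) : r.height < (node l r).height := by
  simp only [height]; omega

lemma Iso.symm {s t : PTree α} (h : Iso s t) : Iso t s := by
  induction h with
  | leaf x => exact .leaf x
  | node _ _ ihac ihbd => exact .node ihac ihbd
  | swap _ _ ihad ihbc => exact .swap ihbc ihad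

lemma Phylo.left {l r : PTree α} (h : Phylo (node l r)) : Phylo l :=
  (List.nodup_append.mp h).1

lemma Phylo.right {l r : PTree α} (h : Phylo (node l r)) : Phylo r :=
  (List.nodup_append.mp h).2.1

variable [DecidableEq α]

@[simp]
lemma leaves_leaf (x : α) : (leaf x).leaves = {x} := rfl

@[simp]
lemma leaves_node (l r : PTree α) : (node l r).leaves = l.leaves ∪ r.leaves :=
  List.toFinset_append

lemma Phylo.disjoint {l r : PTree α} (h : Phylo (node l r)) : Disjoint l.leaves r.leaves :=
  List.disjoint_toFinset_iff_disjoint.mpr (List.disjoint_of_nodup_append h)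

lemma Phylo.card_leaves {t : PTree α} (h : Phylo t) : t.leaves.card = t.leafList.length :=
  List.toFinset_card_of_nodup h

lemma Balanced.height_eq {t : PTree α} (hb : Balanced t) (hp : Phylo t) {n : ℕ}
    (hcard : t.leaves.card = 2 ^ n) : t.height = n :=
  Nat.pow_right_injective le_rfl (show 2 ^ t.height = 2 ^ n by rw [← hb, ← hp.card_leaves, hcard])

lemma card_node_inter (l r : PTree α) (h : Phylo (node l r)) (Y : Finset α) :
    ((node l r).leaves ∩ Y).card = (l.leaves ∩ Y).card + (r.leaves ∩ Y).card := by
  rw [leaves_node, Finset.union_inter_distrib_right,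
    Finset.card_union_of_disjoint
      (h.disjoint.mono Finset.inter_subset_left Finset.inter_subset_left)]

lemma card_inter_node (Y : Finset α) (l r : PTree α) (h : Phylo (node l r)) :
    (Y ∩ (node l r).leaves).card = (Y ∩ l.leaves).card + (Y ∩ r.leaves).card := by
  rw [Finset.inter_comm, card_node_inter l r h, Finset.inter_comm, Finset.inter_comm r.leaves]

lemma restrict_eq_none {t : PTree α} {Y : Finset α} (h : Disjoint t.leaves Y) :
    t.restrict Y = none := by
  induction t with
  | leaf x => simpa [restrict] using h
  | node l r ihl ihr =>
    rw [leaves_node, Finset.disjoint_union_left] at h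
    simp only [restrict, ihl h.1, ihr h.2]

lemma restrict_congr {t : PTree α} {Y Z : Finset α} (h : ∀ x ∈ t.leaves, x ∈ Y ↔ x ∈ Z) :
    t.restrict Y = t.restrict Z := by
  induction t with
  | leaf x => simp only [restrict, h x (by simp)]
  | node l r ihl ihr =>
    simp only [restrict, ihl fun x hx => h x (by simp [hx]), ihr fun x hx => h x (by simp [hx])]

lemma restrict_union_of_disjoint {t : PTree α} {Y Z : Finset α} (h : Disjoint t.leaves Z) :
    t.restrict (Y ∪ Z) = t.restrict Y :=
  restrict_congr fun x hx => by simp [Finset.disjoint_left.mp h hx]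

lemma restrict_node_of_disjoint_right {l r : PTree α} {Y : Finset α}
    (h : Disjoint r.leaves Y) : (node l r).restrict Y = l.restrict Y := by
  simp only [restrict, restrict_eq_none h]
  cases l.restrict Y <;> rfl

lemma restrict_node_of_disjoint_left {l r : PTree α} {Y : Finset α}
    (h : Disjoint l.leaves Y) : (node l r).restrict Y = r.restrict Y := by
  simp only [restrict, restrict_eq_none h]
  cases r.restrict Y <;> rfl

lemma restrict_node_union {l r l' r' : PTree α} (h : Phylo (node l r)) {Y Z : Finset α}
    (hY : Y ⊆ l.leaves) (hZ : Z ⊆ r.leaves)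
    (hl : l.restrict Y = some l') (hr : r.restrict Z = some r') :
    (node l r).restrict (Y ∪ Z) = some (node l' r') := by
  have hlZ : l.restrict (Y ∪ Z) = some l' := by
    rw [restrict_union_of_disjoint (h.disjoint.mono_right hZ), hl]
  have hrY : r.restrict (Y ∪ Z) = some r' := by
    rw [Finset.union_comm, restrict_union_of_disjoint (h.disjoint.symm.mono_right hY), hr]
  simp only [restrict, hlZ, hrY]

lemma restrict_singleton {t : PTree α} (ht : Phylo t) {x : α} (hx : x ∈ t.leaves) :
    t.restrict {x} = some (leaf x) := by
  induction t with
  | leaf y =>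
    rw [leaves_leaf, Finset.mem_singleton] at hx
    simp [restrict, hx]
  | node l r ihl ihr =>
    rcases Finset.mem_union.mp ((leaves_node l r) ▸ hx) with hxl | hxr
    · rw [restrict_node_of_disjoint_right, ihl ht.left hxl]
      exact Finset.disjoint_singleton_right.mpr (ht.disjoint.notMem_of_mem_left_finset hxl)
    · rw [restrict_node_of_disjoint_left, ihr ht.right hxr]
      exact Finset.disjoint_singleton_right.mpr (ht.disjoint.notMem_of_mem_right_finset hxr)

lemma Agree.symm {S T : PTree α} {Y : Finset α} (h : Agree S T Y) : Agree T S Y := by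
  obtain ⟨hY, S', T', hS', hT', hiso⟩ := h
  exact ⟨Finset.inter_comm S.leaves T.leaves ▸ hY, T', S', hT', hS', hiso.symm⟩

lemma agree_singleton {S T : PTree α} (hS : Phylo S) (hT : Phylo T) {x : α}
    (hx : x ∈ S.leaves ∩ T.leaves) : Agree S T {x} := by
  refine ⟨Finset.singleton_subset_iff.mpr hx, leaf x, leaf x, ?_, ?_, .leaf x⟩
  · exact restrict_singleton hS (Finset.mem_inter.mp hx).1
  · exact restrict_singleton hT (Finset.mem_inter.mp hx).2

lemma exists_agree {S T : PTree α} (hS : Phylo S) (hT : Phylo T)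
    (h : 0 < (S.leaves ∩ T.leaves).card) : ∃ Y, Agree S T Y :=
  let ⟨_, hx⟩ := Finset.card_pos.mp h
  ⟨_, agree_singleton hS hT hx⟩

lemma Agree.node_left {S₁ S₂ T : PTree α} (hS : Phylo (node S₁ S₂)) {Y : Finset α}
    (h : Agree S₁ T Y) : Agree (node S₁ S₂) T Y := by
  obtain ⟨hY, S', T', hS', hT', hiso⟩ := h
  refine ⟨hY.trans (Finset.inter_subset_inter (by simp) le_rfl), S', T', ?_, hT', hiso⟩
  rw [restrict_node_of_disjoint_right
    (hS.disjoint.symm.mono_right (hY.trans Finset.inter_subset_left)), hS']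

lemma Agree.node_right {S₁ S₂ T : PTree α} (hS : Phylo (node S₁ S₂)) {Y : Finset α}
    (h : Agree S₂ T Y) : Agree (node S₁ S₂) T Y := by
  obtain ⟨hY, S', T', hS', hT', hiso⟩ := h
  refine ⟨hY.trans (Finset.inter_subset_inter (by simp) le_rfl), S', T', ?_, hT', hiso⟩
  rw [restrict_node_of_disjoint_left (hS.disjoint.mono_right (hY.trans Finset.inter_subset_left)),
    hS']

lemma Agree.node_union {S₁ S₂ T₁ T₂ : PTree α} (hS : Phylo (node S₁ S₂))
    (hT : Phylo (node T₁ T₂)) {Y Z : Finset α} (h₁ : Agree S₁ T₁ Y) (h₂ : Agree S₂ T₂ Z) :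
    Agree (node S₁ S₂) (node T₁ T₂) (Y ∪ Z) := by
  obtain ⟨hY, S₁', T₁', hS₁', hT₁', hiso₁⟩ := h₁
  obtain ⟨hZ, S₂', T₂', hS₂', hT₂', hiso₂⟩ := h₂
  rw [Finset.subset_inter_iff] at hY hZ
  refine ⟨?_, node S₁' S₂', node T₁' T₂', restrict_node_union hS hY.1 hZ.1 hS₁' hS₂',
    restrict_node_union hT hY.2 hZ.2 hT₁' hT₂', .node hiso₁ hiso₂⟩
  rw [leaves_node, leaves_node]
  exact Finset.subset_inter (Finset.union_subset_union hY.1 hZ.1)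
    (Finset.union_subset_union hY.2 hZ.2)

lemma Agree.node_union_swap {S₁ S₂ T₁ T₂ : PTree α} (hS : Phylo (node S₁ S₂))
    (hT : Phylo (node T₁ T₂)) {Y Z : Finset α} (h₁ : Agree S₁ T₂ Y) (h₂ : Agree S₂ T₁ Z) :
    Agree (node S₁ S₂) (node T₁ T₂) (Y ∪ Z) := by
  obtain ⟨hY, S₁', T₂', hS₁', hT₂', hiso₁⟩ := h₁
  obtain ⟨hZ, S₂', T₁', hS₂', hT₁', hiso₂⟩ := h₂
  rw [Finset.subset_inter_iff] at hY hZ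
  refine ⟨?_, node S₁' S₂', node T₁' T₂', restrict_node_union hS hY.1 hZ.1 hS₁' hS₂', ?_,
    .swap hiso₁ hiso₂⟩
  · rw [leaves_node, leaves_node, Finset.union_comm T₁.leaves]
    exact Finset.subset_inter (Finset.union_subset_union hY.1 hZ.1)
      (Finset.union_subset_union hY.2 hZ.2)
  · rw [Finset.union_comm]
    exact restrict_node_union hT hZ.2 hY.2 hT₁' hT₂'

lemma bddAbove_agree_card (S T : PTree α) :
    BddAbove {k | ∃ Y : Finset α, Agree S T Y ∧ Y.card = k} := by
  refine ⟨S.leaves.card, ?_⟩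
  rintro k ⟨Y, ⟨hY, -⟩, rfl⟩
  exact Finset.card_le_card (hY.trans Finset.inter_subset_left)

lemma Agree.card_le_mast {S T : PTree α} {Y : Finset α} (h : Agree S T Y) : Y.card ≤ mast S T :=
  le_csSup (bddAbove_agree_card S T) ⟨Y, h, rfl⟩

lemma exists_agree_card_eq_mast {S T : PTree α} (h : ∃ Y, Agree S T Y) :
    ∃ Y, Agree S T Y ∧ Y.card = mast S T :=
  let ⟨Y, hY⟩ := h
  Nat.sSup_mem (s := {k | ∃ Y : Finset α, Agree S T Y ∧ Y.card = k}) ⟨Y.card, Y, hY, rfl⟩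
    (bddAbove_agree_card S T)

lemma mast_le_mast {S T S' T' : PTree α} (h : ∀ Y, Agree S T Y → Agree S' T' Y) :
    mast S T ≤ mast S' T' := by
  obtain hempty | hne := {k | ∃ Y : Finset α, Agree S T Y ∧ Y.card = k}.eq_empty_or_nonempty
  · rw [mast, hempty, csSup_empty]
    exact Nat.zero_le _
  · refine csSup_le hne ?_
    rintro _ ⟨Y, hY, rfl⟩
    exact (h Y hY).card_le_mast

lemma mast_le_mast_node_left {S₁ S₂ : PTree α} (hS : Phylo (node S₁ S₂)) (T : PTree α) :
    mast S₁ T ≤ mast (node S₁ S₂) T :=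
  mast_le_mast fun _ => Agree.node_left hS

lemma mast_le_mast_node_right {S₁ S₂ : PTree α} (hS : Phylo (node S₁ S₂)) (T : PTree α) :
    mast S₂ T ≤ mast (node S₁ S₂) T :=
  mast_le_mast fun _ => Agree.node_right hS

lemma mast_le_mast_node_left' (S : PTree α) {T₁ T₂ : PTree α} (hT : Phylo (node T₁ T₂)) :
    mast S T₁ ≤ mast S (node T₁ T₂) :=
  mast_le_mast fun _ h => (h.symm.node_left hT).symm

lemma mast_le_mast_node_right' (S : PTree α) {T₁ T₂ : PTree α} (hT : Phylo (node T₁ T₂)) :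
    mast S T₂ ≤ mast S (node T₁ T₂) :=
  mast_le_mast fun _ h => (h.symm.node_right hT).symm

lemma one_le_mast {S T : PTree α} (hS : Phylo S) (hT : Phylo T)
    (h : 0 < (S.leaves ∩ T.leaves).card) : 1 ≤ mast S T :=
  let ⟨_, hx⟩ := Finset.card_pos.mp h
  (agree_singleton hS hT hx).card_le_mast

lemma mast_add_mast_le {A B C D S T : PTree α} (hAB : ∃ Y, Agree A B Y)
    (hCD : ∃ Z, Agree C D Z) (hAC : Disjoint A.leaves C.leaves)
    (hunion : ∀ Y Z, Agree A B Y → Agree C D Z → Agree S T (Y ∪ Z)) :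
    mast A B + mast C D ≤ mast S T := by
  obtain ⟨Y, hY, hYcard⟩ := exists_agree_card_eq_mast hAB
  obtain ⟨Z, hZ, hZcard⟩ := exists_agree_card_eq_mast hCD
  have hYZ : Disjoint Y Z :=
    hAC.mono (hY.1.trans Finset.inter_subset_left) (hZ.1.trans Finset.inter_subset_left)
  calc mast A B + mast C D = (Y ∪ Z).card := by
        rw [Finset.card_union_of_disjoint hYZ, hYcard, hZcard]
    _ ≤ mast S T := (hunion Y Z hY hZ).card_le_mast

lemma mast_add_mast_le_node {S₁ S₂ T₁ T₂ : PTree α} (hS : Phylo (node S₁ S₂))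
    (hT : Phylo (node T₁ T₂)) (h₁ : 0 < (S₁.leaves ∩ T₁.leaves).card)
    (h₂ : 0 < (S₂.leaves ∩ T₂.leaves).card) :
    mast S₁ T₁ + mast S₂ T₂ ≤ mast (node S₁ S₂) (node T₁ T₂) :=
  mast_add_mast_le (exists_agree hS.left hT.left h₁) (exists_agree hS.right hT.right h₂)
    hS.disjoint fun _ _ => Agree.node_union hS hT

lemma mast_add_mast_le_node_swap {S₁ S₂ T₁ T₂ : PTree α} (hS : Phylo (node S₁ S₂))
    (hT : Phylo (node T₁ T₂)) (h₁ : 0 < (S₁.leaves ∩ T₂.leaves).card)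
    (h₂ : 0 < (S₂.leaves ∩ T₁.leaves).card) :
    mast S₁ T₂ + mast S₂ T₁ ≤ mast (node S₁ S₂) (node T₁ T₂) :=
  mast_add_mast_le (exists_agree hS.left hT.right h₁) (exists_agree hS.right hT.left h₂)
    hS.disjoint fun _ _ => Agree.node_union_swap hS hT

end PhyloMAST.PTree

namespace PhyloMAST

noncomputable def mastBound (t h : ℝ) : ℝ := 2 ^ (0.22 * Real.logb 2 t - 0.025 * h)

lemma mastBound_mono {x y h h' : ℝ} (hx : 0 < x) (hxy : x ≤ y) (hh : h' ≤ h) :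
    mastBound x h ≤ mastBound y h' := by
  have hlog := Real.logb_le_logb_of_le one_lt_two hx hxy
  exact Real.rpow_le_rpow_of_exponent_le one_le_two (by linarith)

lemma mastBound_two_rpow_mul {s : ℝ} (hs : 0 < s) (u h k : ℝ) :
    mastBound (2 ^ u * s) (h - k) = 2 ^ (0.22 * u + 0.025 * k) * mastBound s h := by
  unfold mastBound
  rw [Real.logb_mul (by positivity) hs.ne', Real.logb_rpow two_pos (by norm_num),
    ← Real.rpow_add two_pos]
  ring_nf

lemma mastBound_one_le_one {h : ℝ} (hh : 0 ≤ h) : mastBound 1 h ≤ 1 :=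
  Real.rpow_le_one_of_one_le_of_nonpos one_le_two (by simp only [Real.logb_one]; linarith)

lemma rpow_le_of_rpow_mul_le_pow {x c r : ℝ} {n : ℕ} (hx : 0 ≤ x) (hc : 0 ≤ c) (hn : n ≠ 0)
    (h : x ^ (r * n) ≤ c ^ n) : x ^ r ≤ c := by
  rwa [← pow_le_pow_iff_left₀ (Real.rpow_nonneg hx r) hc hn, ← Real.rpow_mul_natCast hx]

lemma two_rpow_add_two_mul_two_rpow_le_one :
    (2 : ℝ) ^ (-(5 / 44) : ℝ) + 2 * 2 ^ (-(105 / 22) : ℝ) ≤ 1 := by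
  have hρ : (2 : ℝ) ^ (-(5 / 44) : ℝ) ≤ 37 / 40 :=
    rpow_le_of_rpow_mul_le_pow (n := 44) (by norm_num) (by norm_num) (by norm_num) (by norm_num)
  have hδ : (2 : ℝ) ^ (-(105 / 22) : ℝ) ≤ 3 / 80 :=
    rpow_le_of_rpow_mul_le_pow (n := 22) (by norm_num) (by norm_num) (by norm_num) (by norm_num)
  linarith

lemma row_or_col_or_diag_large {ρ δ a b c d s : ℝ} (hρδ : ρ + 2 * δ ≤ 1) (hs : 0 ≤ s)
    (hsum : a + b + c + d = s) :
    ρ * s ≤ a + b ∨ ρ * s ≤ c + d ∨ ρ * s ≤ a + c ∨ ρ * s ≤ b + d ∨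
      (δ * s ≤ a ∧ δ * s ≤ d) ∨ (δ * s ≤ b ∧ δ * s ≤ c) := by
  have hsplit : ρ * s + 2 * (δ * s) ≤ s := by nlinarith
  by_contra! h
  obtain ⟨hab, hcd, hac, hbd, had, hbc⟩ := h
  rcases le_or_gt (δ * s) a with ha | ha <;> rcases le_or_gt (δ * s) b with hb | hb
  · linarith [had ha, hbc hb]
  · linarith [had ha]
  · linarith [hbc hb]
  · linarith

end PhyloMAST

namespace PhyloMAST.PTree

variable {α : Type} [DecidableEq α]

def MastBoundHolds (S T : PTree α) : Prop :=
  0 < (S.leaves ∩ T.leaves).card →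
    mastBound (S.leaves ∩ T.leaves).card ((S.height : ℝ) + T.height) ≤ mast S T

lemma MastBoundHolds.of_card_le_one {S T : PTree α} (hS : Phylo S) (hT : Phylo T)
    (h : (S.leaves ∩ T.leaves).card ≤ 1) : MastBoundHolds S T := by
  intro hpos
  rw [show (S.leaves ∩ T.leaves).card = 1 by omega, Nat.cast_one]
  calc mastBound 1 ((S.height : ℝ) + T.height) ≤ 1 := mastBound_one_le_one (by positivity)
    _ ≤ mast S T := by exact_mod_cast one_le_mast hS hT hpos

lemma MastBoundHolds.mastBound_le {A B : PTree α} (h : MastBoundHolds A B) {x H : ℝ}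
    (hx : 0 < x) (hxcard : x ≤ (A.leaves ∩ B.leaves).card) (hH : (A.height : ℝ) + B.height ≤ H) :
    mastBound x H ≤ mast A B :=
  (mastBound_mono hx hxcard hH).trans (h (by exact_mod_cast hx.trans_le hxcard))

lemma MastBoundHolds.of_row {A B S T : PTree α} (hAB : MastBoundHolds A B)
    (hmast : mast A B ≤ mast S T) (hheight : A.height + B.height + 1 ≤ S.height + T.height)
    (hcard : (2 : ℝ) ^ (-(5 / 44) : ℝ) * (S.leaves ∩ T.leaves).card ≤
      (A.leaves ∩ B.leaves).card) :
    MastBoundHolds S T := by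
  intro hpos
  have hheight' : (A.height : ℝ) + B.height + 1 ≤ S.height + T.height := by
    exact_mod_cast hheight
  calc mastBound (S.leaves ∩ T.leaves).card ((S.height : ℝ) + T.height)
      = mastBound ((2 : ℝ) ^ (-(5 / 44) : ℝ) * (S.leaves ∩ T.leaves).card)
          ((S.height : ℝ) + T.height - 1) := by
        rw [mastBound_two_rpow_mul (by exact_mod_cast hpos)]; norm_num
    _ ≤ mast A B := hAB.mastBound_le (by positivity) hcard (by linarith)
    _ ≤ mast S T := by exact_mod_cast hmast

lemma MastBoundHolds.of_diag {A B C D S T : PTree α} (hAB : MastBoundHolds A B)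
    (hCD : MastBoundHolds C D)
    (hmast : 0 < (A.leaves ∩ B.leaves).card → 0 < (C.leaves ∩ D.leaves).card →
      mast A B + mast C D ≤ mast S T)
    (hheightAB : A.height + B.height + 2 ≤ S.height + T.height)
    (hheightCD : C.height + D.height + 2 ≤ S.height + T.height)
    (hcardAB : (2 : ℝ) ^ (-(105 / 22) : ℝ) * (S.leaves ∩ T.leaves).card ≤
      (A.leaves ∩ B.leaves).card)
    (hcardCD : (2 : ℝ) ^ (-(105 / 22) : ℝ) * (S.leaves ∩ T.leaves).card ≤
      (C.leaves ∩ D.leaves).card) :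
    MastBoundHolds S T := by
  intro hpos
  have hheightAB' : (A.height : ℝ) + B.height + 2 ≤ S.height + T.height := by
    exact_mod_cast hheightAB
  have hheightCD' : (C.height : ℝ) + D.height + 2 ≤ S.height + T.height := by
    exact_mod_cast hheightCD
  set t : ℝ := ((S.leaves ∩ T.leaves).card : ℝ)
  set H : ℝ := (S.height : ℝ) + T.height
  have hδt : 0 < (2 : ℝ) ^ (-(105 / 22) : ℝ) * t := by positivity
  calc mastBound t H
      = mastBound ((2 : ℝ) ^ (-(105 / 22) : ℝ) * t) (H - 2) +
          mastBound ((2 : ℝ) ^ (-(105 / 22) : ℝ) * t) (H - 2) := by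
        rw [mastBound_two_rpow_mul (by positivity)]; norm_num; ring
    _ ≤ mast A B + mast C D :=
        add_le_add (hAB.mastBound_le hδt hcardAB (by linarith))
          (hCD.mastBound_le hδt hcardCD (by linarith))
    _ ≤ mast S T := by
        exact_mod_cast hmast (by exact_mod_cast hδt.trans_le hcardAB)
          (by exact_mod_cast hδt.trans_le hcardCD)

lemma MastBoundHolds.of_children {S₁ S₂ T₁ T₂ : PTree α} (hS : Phylo (node S₁ S₂))
    (hT : Phylo (node T₁ T₂))
    (h₁ : MastBoundHolds S₁ (node T₁ T₂)) (h₂ : MastBoundHolds S₂ (node T₁ T₂))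
    (h₁' : MastBoundHolds (node S₁ S₂) T₁) (h₂' : MastBoundHolds (node S₁ S₂) T₂)
    (h₁₁ : MastBoundHolds S₁ T₁) (h₂₂ : MastBoundHolds S₂ T₂)
    (h₁₂ : MastBoundHolds S₁ T₂) (h₂₁ : MastBoundHolds S₂ T₁) :
    MastBoundHolds (node S₁ S₂) (node T₁ T₂) := by
  have hS₁ := height_lt_node_left S₁ S₂
  have hS₂ := height_lt_node_right S₁ S₂
  have hT₁ := height_lt_node_left T₁ T₂
  have hT₂ := height_lt_node_right T₁ T₂
  have hrow₁ := card_inter_node S₁.leaves T₁ T₂ hT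
  have hrow₂ := card_inter_node S₂.leaves T₁ T₂ hT
  have hcol₁ := card_node_inter S₁ S₂ hS T₁.leaves
  have hcol₂ := card_node_inter S₁ S₂ hS T₂.leaves
  have hsum : ((S₁.leaves ∩ T₁.leaves).card + (S₁.leaves ∩ T₂.leaves).card +
      (S₂.leaves ∩ T₁.leaves).card + (S₂.leaves ∩ T₂.leaves).card : ℝ) =
      ((node S₁ S₂).leaves ∩ (node T₁ T₂).leaves).card := by
    rw [card_node_inter _ _ hS, hrow₁, hrow₂]; push_cast; ring
  rcases row_or_col_or_diag_large two_rpow_add_two_mul_two_rpow_le_one (Nat.cast_nonneg _) hsum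
    with h | h | h | h | ⟨ha, hd⟩ | ⟨hb, hc⟩
  · exact h₁.of_row (mast_le_mast_node_left hS _) (by omega) (by rw [hrow₁]; push_cast; exact h)
  · exact h₂.of_row (mast_le_mast_node_right hS _) (by omega) (by rw [hrow₂]; push_cast; exact h)
  · exact h₁'.of_row (mast_le_mast_node_left' _ hT) (by omega) (by rw [hcol₁]; push_cast; exact h)
  · exact h₂'.of_row (mast_le_mast_node_right' _ hT) (by omega) (by rw [hcol₂]; push_cast; exact h)
  · exact h₁₁.of_diag h₂₂ (mast_add_mast_le_node hS hT) (by omega) (by omega) ha hd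
  · exact h₁₂.of_diag h₂₁ (mast_add_mast_le_node_swap hS hT) (by omega) (by omega) hb hc

theorem mastBoundHolds {S T : PTree α} (hS : Phylo S) (hT : Phylo T) : MastBoundHolds S T := by
  induction S generalizing T with
  | leaf x =>
    exact .of_card_le_one hS hT
      ((Finset.card_le_card Finset.inter_subset_left).trans_eq (Finset.card_singleton x))
  | node S₁ S₂ ihS₁ ihS₂ =>
    induction T with
    | leaf y =>
      exact .of_card_le_one hS hT
        ((Finset.card_le_card Finset.inter_subset_right).trans_eq (Finset.card_singleton y))
    | node T₁ T₂ ihT₁ ihT₂ =>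
      exact .of_children hS hT (ihS₁ hS.left hT) (ihS₂ hS.right hT) (ihT₁ hT.left) (ihT₂ hT.right)
        (ihS₁ hS.left hT.left) (ihS₂ hS.right hT.right) (ihS₁ hS.left hT.right)
        (ihS₂ hS.right hT.left)

end PhyloMAST.PTree

open PhyloMAST PTree

/-- If `S` and `T` are balanced phylogenetic trees on
`2 ^ h₁` and `2 ^ h₂` leaves whose label sets overlap in exactly `t > 0`
leaves, then `mast S T ≥ 2 ^ (0.22 log₂ t - 0.025 (h₁ + h₂))`. -/
theorem mast_ge_of_overlap {α : Type} [DecidableEq α]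
    (h1 h2 t : ℕ) (ht : 0 < t) (S T : PTree α)
    (hS : Phylo S) (hT : Phylo T) (hbS : Balanced S) (hbT : Balanced T)
    (hScard : S.leaves.card = 2 ^ h1) (hTcard : T.leaves.card = 2 ^ h2)
    (hoverlap : (S.leaves ∩ T.leaves).card = t) :
    (2 : ℝ) ^ (0.22 * Real.logb 2 t - 0.025 * ((h1 : ℝ) + (h2 : ℝ)))
      ≤ (mast S T : ℝ) := by
  have hbound := mastBoundHolds hS hT (hoverlap ▸ ht)
  rwa [hoverlap, hbS.height_eq hS hScard, hbT.height_eq hT hTcard] at hbound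
end
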